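/- arXiv:math/0511344 — 3 statements merged into one kernel-verified Lean document; each statement's English description precedes it below -/
import Mathlib

section
/- Let A be a unital associative algebra over ℂ with derivation ∂, and define the vertex operator Y(a,x)b = (e^{x∂}a)·b. Then the nonlocal vertex algebra (A,∂) satisfies weak commutativity (i.e., for all a,b there is k ∈ ℕ with (x₁−x₂)^k Y(a,x₁)Y(b,x₂) = (x₁−x₂)^k Y(b,x₂)Y(a,x₁) as operators on A) if and only if A is commutative. -/
/-- The double series `Y(a,x_v)Y(b,x_{1-v})c` for the Borcherds vertex operator
`Y(a,x)b = (e^{x∂}a)b`, as a formal power series in two variables; the outer operator `a`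
acts in the variable `v : Fin 2`. -/
noncomputable def borchDoubleSeries {A : Type*} [Ring A] [Algebra ℂ A]
    (dd : Module.End ℂ A) (a b c : A) (v : Fin 2) : MvPowerSeries (Fin 2) A :=
  fun e => (((e v).factorial : ℂ) * ((e (1 - v)).factorial : ℂ))⁻¹ •
    ((dd ^ (e v)) a * ((dd ^ (e (1 - v))) b * c))

/-!
The constant term of `Y(a,x₁)Y(b,x₂)c` is `abc`. Multiplying by `(x₁ - x₂)^k` moves it,
unchanged, to the coefficient of `x₁^k`, so weak commutativity applied to `c = 1` gives
`ab = ba`. Conversely, if `A` is commutative the two double series already agree term by term.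
-/

namespace MvPowerSeries

variable {σ R : Type*} [Ring R]

theorem coeff_single_X_mul_of_ne {i j : σ} (hij : i ≠ j) (n : ℕ) (f : MvPowerSeries σ R) :
    coeff (Finsupp.single i (n + 1)) (X j * f) = 0 := by
  rw [X, coeff_monomial_mul, if_neg]
  intro hle
  simpa [Finsupp.single_apply, hij.symm] using hle j

theorem coeff_single_succ_X_mul (i : σ) (n : ℕ) (f : MvPowerSeries σ R) :
    coeff (Finsupp.single i (n + 1)) (X i * f) = coeff (Finsupp.single i n) f := by
  rw [X, show Finsupp.single i (n + 1) = Finsupp.single i 1 + Finsupp.single i n by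
    rw [← Finsupp.single_add, add_comm], coeff_add_monomial_mul, one_mul]

/-- Only the leading term `X i ^ k` of `(X i - X j) ^ k` reaches the monomial `X i ^ k`. -/
theorem coeff_single_X_sub_X_pow_mul {i j : σ} (hij : i ≠ j) (k : ℕ) (f : MvPowerSeries σ R) :
    coeff (Finsupp.single i k) ((X i - X j) ^ k * f) = constantCoeff f := by
  induction k generalizing f with
  | zero => simp
  | succ k ih =>
    rw [pow_succ', mul_assoc, sub_mul, map_sub, coeff_single_succ_X_mul,
      coeff_single_X_mul_of_ne hij, sub_zero, ih]

end MvPowerSeries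

open MvPowerSeries

section Borcherds

variable {A : Type*} [Ring A] [Algebra ℂ A] (dd : Module.End ℂ A)

theorem constantCoeff_borchDoubleSeries (a b c : A) (v : Fin 2) :
    constantCoeff (borchDoubleSeries dd a b c v) = a * (b * c) := by
  simp [borchDoubleSeries, ← coeff_zero_eq_constantCoeff_apply, coeff_apply]

theorem borchDoubleSeries_swap_of_commute (hcomm : ∀ a b : A, a * b = b * a) (a b c : A) :
    borchDoubleSeries dd a b c 0 = borchDoubleSeries dd b a c 1 := by
  funext e
  simp only [borchDoubleSeries, show (1 - 0 : Fin 2) = 1 by decide,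
    show (1 - 1 : Fin 2) = 0 by decide]
  rw [mul_comm ((e 1).factorial : ℂ), ← mul_assoc, hcomm ((dd ^ e 0) a), mul_assoc]

end Borcherds

theorem borcherds_weak_commutativity_iff_commutative_general
    {A : Type*} [Ring A] [Algebra ℂ A] (dd : Module.End ℂ A) :
    (∀ a b : A, ∃ k : ℕ, ∀ c : A,
        (MvPowerSeries.X (0 : Fin 2) - MvPowerSeries.X 1 : MvPowerSeries (Fin 2) A) ^ k *
            borchDoubleSeries dd a b c 0 =
          (MvPowerSeries.X (0 : Fin 2) - MvPowerSeries.X 1 : MvPowerSeries (Fin 2) A) ^ k *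
            borchDoubleSeries dd b a c 1) ↔
      ∀ a b : A, a * b = b * a := by
  constructor
  · intro hweak a b
    obtain ⟨k, hk⟩ := hweak a b
    have hcoeff := congrArg (coeff (Finsupp.single (0 : Fin 2) k)) (hk 1)
    simpa only [coeff_single_X_sub_X_pow_mul (show (0 : Fin 2) ≠ 1 by decide),
      constantCoeff_borchDoubleSeries, mul_one] using hcoeff
  · intro hcomm a b
    exact ⟨0, fun c => by rw [borchDoubleSeries_swap_of_commute dd hcomm]⟩

/-- the Borcherds nonlocal vertex algebra `(A,∂)` satisfies weak commutativity
(∃ k, (x₁−x₂)^k Y(a,x₁)Y(b,x₂) = (x₁−x₂)^k Y(b,x₂)Y(a,x₁)) iff `A` is commutative. -/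
theorem borcherds_weak_commutativity_iff_commutative
    {A : Type*} [Ring A] [Algebra ℂ A] (dd : Module.End ℂ A)
    (hder : ∀ a b : A, dd (a * b) = dd a * b + a * dd b) :
    (∀ a b : A, ∃ k : ℕ, ∀ c : A,
        (MvPowerSeries.X (0 : Fin 2) - MvPowerSeries.X 1 : MvPowerSeries (Fin 2) A) ^ k *
            borchDoubleSeries dd a b c 0 =
          (MvPowerSeries.X (0 : Fin 2) - MvPowerSeries.X 1 : MvPowerSeries (Fin 2) A) ^ k *
            borchDoubleSeries dd b a c 1) ↔
      ∀ a b : A, a * b = b * a :=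
  borcherds_weak_commutativity_iff_commutative_general dd
end

section
/- Let L be a free abelian group of finite rank with ℤ-valued symmetric bilinear form ⟨·,·⟩, h = ℂ⊗L, and B_L = ℂ[L]⊗S(ĥ⁻) with the differential algebra structure where L(−1)(e^α⊗u) = e^α⊗α(−1)u + e^α⊗L(−1)u. Let A be any commutative associative ℂ-algebra with a derivation ∂, and let f: ℂ[L] → A be an algebra homomorphism sending each e^α to a unit. Then f extends uniquely to a homomorphism of differential algebras F: B_L → A (i.e., F is an algebra homomorphism with F∘L(−1) = ∂∘F), determined by F(α(−1−n)) = (1/n!)∂ⁿ(f(e^{−α})∂f(e^α)) for α ∈ L, n ≥ 0. -/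
/-!
Since `e^α` is invertible in `ℂ[L]`, the logarithmic derivative `λ(α) = f(e^{-α}) ∂f(e^α)` is
additive in `α`. In `B_L` one has `α(-1) = e^{-α} · L(-1)e^α` and `α(-2-n) = L(-1)α(-1-n)/(n+1)`,
so a differential homomorphism extending `f` must send `α(-1-n)` to `∂ⁿλ(α)/n!`; this pins it down
on generators. Conversely, prescribing these values on the basis elements `bᵢ(-1-n)` defines an
algebra map `F` on `ℂ[L] ⊗ S(ĥ⁻)`, and additivity of `λ` gives `F(α(-1-n)) = ∂ⁿλ(α)/n!` for every
`α`. Then `F ∘ L(-1)` and `∂ ∘ F` are both Leibniz along `F` and agree on generators, hence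
everywhere.
-/

open scoped TensorProduct

/-- The element `α(−1−n)` of `S(ĥ⁻)`, modelled in `MvPolynomial (ι × ℕ) ℂ` where
`X (i, n)` represents `bᵢ(−1−n)` for a basis `bᵢ` of the lattice `L = ι →₀ ℤ`. -/
noncomputable def latticeGen {ι : Type*} [Fintype ι] (α : ι →₀ ℤ) (n : ℕ) :
    MvPolynomial (ι × ℕ) ℂ :=
  ∑ i : ι, (α i : ℂ) • MvPolynomial.X (i, n)

open Algebra.TensorProduct (includeLeft includeRight)
open AddMonoidAlgebra (single)

namespace AlgHom

variable {R A L : Type*} [CommSemiring R] [CommSemiring A] [Algebra R A] [AddCommGroup L]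
  (f : AddMonoidAlgebra R L →ₐ[R] A)

theorem map_single_add (a b : L) : f (single (a + b) 1) = f (single a 1) * f (single b 1) := by
  rw [← map_mul, AddMonoidAlgebra.single_mul_single, one_mul]

theorem map_single_neg_mul_map_single (a : L) : f (single (-a) 1) * f (single a 1) = 1 := by
  rw [← f.map_single_add, neg_add_cancel, ← AddMonoidAlgebra.one_def, map_one]

end AlgHom

namespace Derivation

variable {R A : Type*} [CommRing R] [CommRing A] [Algebra R A]

noncomputable def ofLeibniz (d : A →ₗ[R] A) (h : ∀ a b, d (a * b) = d a * b + a * d b) :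
    Derivation R A A :=
  mk' d fun a b => by rw [h, smul_eq_mul, smul_eq_mul, mul_comm (d a), add_comm]

variable {L : Type*} [AddCommGroup L] (δ : Derivation R A A) (f : AddMonoidAlgebra R L →ₐ[R] A)

noncomputable def groupLogDeriv : L →+ A where
  toFun a := f (single (-a) 1) * δ (f (single a 1))
  map_zero' := by
    rw [neg_zero, ← AddMonoidAlgebra.one_def, map_one, map_one_eq_zero, mul_zero]
  map_add' a b := by
    rw [neg_add, f.map_single_add, f.map_single_add, leibniz, smul_eq_mul, smul_eq_mul]
    linear_combination f (single (-b) 1) * δ (f (single b 1)) * f.map_single_neg_mul_map_single a +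
      f (single (-a) 1) * δ (f (single a 1)) * f.map_single_neg_mul_map_single b

theorem groupLogDeriv_apply (a : L) :
    groupLogDeriv δ f a = f (single (-a) 1) * δ (f (single a 1)) :=
  rfl

theorem apply_map_single (a : L) : δ (f (single a 1)) = f (single a 1) * groupLogDeriv δ f a := by
  rw [groupLogDeriv_apply, ← mul_assoc, mul_comm (f _), f.map_single_neg_mul_map_single, one_mul]

end Derivation

theorem AddMonoidHom.apply_eq_sum_smul_single {ι M : Type*} [Fintype ι] [AddCommGroup M]
    (φ : (ι →₀ ℤ) →+ M) (a : ι →₀ ℤ) : φ a = ∑ i, a i • φ (Finsupp.single i 1) := by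
  conv_lhs => rw [← Finsupp.univ_sum_single a]
  simp only [map_sum, ← map_zsmul, Finsupp.smul_single_one]

namespace Module.End

variable {K A : Type*} [Field K] [AddCommGroup A] [Module K A] (d : Module.End K A)

noncomputable def taylorCoeff (n : ℕ) : Module.End K A :=
  ((n.factorial : K))⁻¹ • (d ^ n : Module.End K A)

theorem taylorCoeff_zero (a : A) : d.taylorCoeff 0 a = a := by
  simp [taylorCoeff]

theorem taylorCoeff_succ (n : ℕ) (a : A) :
    d.taylorCoeff (n + 1) a = ((n : K) + 1)⁻¹ • d (d.taylorCoeff n a) := by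
  simp only [taylorCoeff, LinearMap.smul_apply, map_smul, smul_smul, Nat.factorial_succ,
    Nat.cast_mul, Nat.cast_succ, mul_inv, pow_succ', Module.End.mul_apply]

end Module.End

theorem AddMonoidAlgebra.adjoin_range_single_one (R M : Type*) [CommSemiring R] [AddMonoid M] :
    Algebra.adjoin R (Set.range fun m : M => single m (1 : R)) = ⊤ :=
  eq_top_iff.2 fun g _ => Algebra.adjoin_mono (Set.image_subset_range _ _) (mem_adjoin_support g)

theorem Algebra.TensorProduct.adjoin_image_includeLeft_union_image_includeRight
    {R A B : Type*} [CommSemiring R] [Semiring A] [Semiring B] [Algebra R A] [Algebra R B]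
    {s : Set A} {t : Set B} (hs : adjoin R s = ⊤) (ht : adjoin R t = ⊤) :
    adjoin R ((includeLeft : A →ₐ[R] A ⊗[R] B) '' s ∪ (includeRight : B →ₐ[R] A ⊗[R] B) '' t) =
      ⊤ := by
  rw [adjoin_union, adjoin_image, adjoin_image, hs, ht, Algebra.map_top, Algebra.map_top]
  simpa using (map_range (AlgHom.id R A) (AlgHom.id R B)).symm

theorem AlgHom.map_derivation_eq_of_adjoin_eq_top {R A B : Type*} [CommRing R] [CommRing A]
    [CommRing B] [Algebra R A] [Algebra R B] (F : B →ₐ[R] A) (D : Derivation R B B)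
    (δ : Derivation R A A) {s : Set B} (hs : Algebra.adjoin R s = ⊤)
    (h : ∀ x ∈ s, F (D x) = δ (F x)) (x : B) : F (D x) = δ (F x) := by
  have hx : x ∈ Algebra.adjoin R s := hs ▸ Algebra.mem_top
  induction hx using Algebra.adjoin_induction with
  | mem x hx => exact h x hx
  | algebraMap r => simp only [Derivation.map_algebraMap, map_zero, AlgHom.commutes]
  | add x y _ _ hx hy => simp only [map_add, hx, hy]
  | mul x y _ _ hx hy => simp only [Derivation.leibniz, smul_eq_mul, map_add, map_mul, hx, hy]

open Module.End

abbrev LatticeAlgebra (ι : Type*) : Type _ :=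
  AddMonoidAlgebra ℂ (ι →₀ ℤ) ⊗[ℂ] MvPolynomial (ι × ℕ) ℂ

namespace LatticeAlgebra

theorem adjoin_generators {ι : Type*} :
    Algebra.adjoin ℂ
      ((includeLeft : _ →ₐ[ℂ] LatticeAlgebra ι) '' Set.range (single · 1) ∪
        (includeRight : _ →ₐ[ℂ] LatticeAlgebra ι) '' Set.range MvPolynomial.X) = ⊤ :=
  Algebra.TensorProduct.adjoin_image_includeLeft_union_image_includeRight
    (AddMonoidAlgebra.adjoin_range_single_one ℂ _) MvPolynomial.adjoin_range_X

variable {ι : Type*} {A : Type*} [CommRing A] [Algebra ℂ A]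
  (D : Derivation ℂ (LatticeAlgebra ι) (LatticeAlgebra ι)) (δ : Derivation ℂ A A)
  (f : AddMonoidAlgebra ℂ (ι →₀ ℤ) →ₐ[ℂ] A)

noncomputable def lift : LatticeAlgebra ι →ₐ[ℂ] A :=
  Algebra.TensorProduct.productMap f <| MvPolynomial.aeval fun p =>
    taylorCoeff (δ : Module.End ℂ A) p.2 (δ.groupLogDeriv f (Finsupp.single p.1 1))

theorem lift_tmul (g : AddMonoidAlgebra ℂ (ι →₀ ℤ)) (p : MvPolynomial (ι × ℕ) ℂ) :
    lift δ f (g ⊗ₜ[ℂ] p) = f g * lift δ f (1 ⊗ₜ[ℂ] p) := by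
  simp only [lift, Algebra.TensorProduct.productMap_apply_tmul, map_one, one_mul]

theorem lift_tmul_one (g : AddMonoidAlgebra ℂ (ι →₀ ℤ)) : lift δ f (g ⊗ₜ[ℂ] 1) = f g := by
  rw [lift_tmul, ← Algebra.TensorProduct.one_def, map_one, mul_one]

variable [Fintype ι]

/-- The paper's `L(-1)`, specified on generators. -/
structure IsTranslation : Prop where
  map_single_tmul_one : ∀ a : ι →₀ ℤ,
    D (single a 1 ⊗ₜ[ℂ] 1) = single a 1 ⊗ₜ[ℂ] latticeGen a 0
  map_one_tmul_X : ∀ (i : ι) (n : ℕ),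
    D ((1 : AddMonoidAlgebra ℂ (ι →₀ ℤ)) ⊗ₜ[ℂ] MvPolynomial.X (i, n)) =
      ((n : ℂ) + 1) • (1 ⊗ₜ[ℂ] MvPolynomial.X (i, n + 1))

variable {D}

theorem latticeGen_single (i : ι) (n : ℕ) :
    latticeGen (Finsupp.single i 1) n = MvPolynomial.X (i, n) := by
  classical
  simp [latticeGen, Finsupp.single_apply]

theorem IsTranslation.apply_one_tmul_latticeGen (hD : IsTranslation D) (a : ι →₀ ℤ) (n : ℕ) :
    D ((1 : AddMonoidAlgebra ℂ (ι →₀ ℤ)) ⊗ₜ[ℂ] latticeGen a n) =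
      ((n : ℂ) + 1) • (1 ⊗ₜ[ℂ] latticeGen a (n + 1)) := by
  simp only [latticeGen, TensorProduct.tmul_sum, TensorProduct.tmul_smul, map_sum, D.map_smul,
    hD.map_one_tmul_X, Finset.smul_sum, smul_comm ((_ : ℂ) + 1)]

theorem IsTranslation.one_tmul_latticeGen_zero (hD : IsTranslation D) (a : ι →₀ ℤ) :
    (1 : AddMonoidAlgebra ℂ (ι →₀ ℤ)) ⊗ₜ[ℂ] latticeGen a 0 =
      (single (-a) 1 ⊗ₜ[ℂ] 1) * D (single a 1 ⊗ₜ[ℂ] 1) := by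
  rw [hD.map_single_tmul_one, Algebra.TensorProduct.tmul_mul_tmul,
    AddMonoidAlgebra.single_mul_single, neg_add_cancel, one_mul, one_mul,
    ← AddMonoidAlgebra.one_def]

theorem map_one_tmul_latticeGen (hD : IsTranslation D) (F : LatticeAlgebra ι →ₐ[ℂ] A)
    (hF : ∀ g, F (g ⊗ₜ[ℂ] 1) = f g) (hFD : ∀ x, F (D x) = δ (F x)) (a : ι →₀ ℤ) (n : ℕ) :
    F (1 ⊗ₜ[ℂ] latticeGen a n) = taylorCoeff (δ : Module.End ℂ A) n (δ.groupLogDeriv f a) := by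
  induction n with
  | zero =>
    rw [taylorCoeff_zero, hD.one_tmul_latticeGen_zero, map_mul, hFD, hF, hF,
      δ.groupLogDeriv_apply]
  | succ n ih =>
    rw [taylorCoeff_succ, ← ih, Derivation.coeFn_coe, ← hFD, hD.apply_one_tmul_latticeGen,
      map_smul, inv_smul_smul₀ (Nat.cast_add_one_ne_zero n)]

theorem lift_one_tmul_latticeGen (a : ι →₀ ℤ) (n : ℕ) :
    lift δ f (1 ⊗ₜ[ℂ] latticeGen a n) =
      taylorCoeff (δ : Module.End ℂ A) n (δ.groupLogDeriv f a) := by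
  rw [AddMonoidHom.apply_eq_sum_smul_single (δ.groupLogDeriv f) a]
  simp only [lift, Algebra.TensorProduct.productMap_apply_tmul, map_one, one_mul,
    latticeGen, map_sum, map_smul, MvPolynomial.aeval_X, ← Int.cast_smul_eq_zsmul ℂ]

theorem lift_map_derivation (hD : IsTranslation D) (x : LatticeAlgebra ι) :
    lift δ f (D x) = δ (lift δ f x) := by
  refine (lift δ f).map_derivation_eq_of_adjoin_eq_top D δ adjoin_generators ?_ x
  rintro _ (⟨_, ⟨a, rfl⟩, rfl⟩ | ⟨_, ⟨⟨i, n⟩, rfl⟩, rfl⟩)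
  · rw [Algebra.TensorProduct.includeLeft_apply, hD.map_single_tmul_one, lift_tmul,
      lift_one_tmul_latticeGen, taylorCoeff_zero, lift_tmul_one, δ.apply_map_single]
  · rw [Algebra.TensorProduct.includeRight_apply, hD.map_one_tmul_X, map_smul,
      ← latticeGen_single, ← latticeGen_single, lift_one_tmul_latticeGen,
      lift_one_tmul_latticeGen, taylorCoeff_succ, smul_inv_smul₀ (Nat.cast_add_one_ne_zero n),
      Derivation.coeFn_coe]

theorem eq_lift (hD : IsTranslation D) (F : LatticeAlgebra ι →ₐ[ℂ] A)
    (hF : ∀ g, F (g ⊗ₜ[ℂ] 1) = f g) (hFD : ∀ x, F (D x) = δ (F x)) : F = lift δ f := by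
  refine AlgHom.ext_of_adjoin_eq_top adjoin_generators ?_
  rintro _ (⟨_, ⟨a, rfl⟩, rfl⟩ | ⟨_, ⟨⟨i, n⟩, rfl⟩, rfl⟩)
  · rw [Algebra.TensorProduct.includeLeft_apply, hF, lift_tmul_one]
  · rw [Algebra.TensorProduct.includeRight_apply, ← latticeGen_single,
      map_one_tmul_latticeGen δ f hD F hF hFD, lift_one_tmul_latticeGen]

end LatticeAlgebra

theorem lattice_differential_algebra_universal_property_general
    {ι : Type*} [Fintype ι]
    (D : (AddMonoidAlgebra ℂ (ι →₀ ℤ) ⊗[ℂ] MvPolynomial (ι × ℕ) ℂ) →ₗ[ℂ]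
         (AddMonoidAlgebra ℂ (ι →₀ ℤ) ⊗[ℂ] MvPolynomial (ι × ℕ) ℂ))
    (hDder : ∀ x y, D (x * y) = D x * y + x * D y)
    (hD1 : ∀ α : ι →₀ ℤ,
      D (AddMonoidAlgebra.single α 1 ⊗ₜ[ℂ] 1) =
        AddMonoidAlgebra.single α 1 ⊗ₜ[ℂ] latticeGen α 0)
    (hD2 : ∀ (i : ι) (n : ℕ),
      D (1 ⊗ₜ[ℂ] MvPolynomial.X (i, n)) =
        ((n : ℂ) + 1) • (1 ⊗ₜ[ℂ] MvPolynomial.X (i, n + 1)))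
    {A : Type*} [CommRing A] [Algebra ℂ A]
    (dd : Module.End ℂ A) (hdd : ∀ a b : A, dd (a * b) = dd a * b + a * dd b)
    (f : AddMonoidAlgebra ℂ (ι →₀ ℤ) →ₐ[ℂ] A) :
    (∃! F : (AddMonoidAlgebra ℂ (ι →₀ ℤ) ⊗[ℂ] MvPolynomial (ι × ℕ) ℂ) →ₐ[ℂ] A,
      (∀ g : AddMonoidAlgebra ℂ (ι →₀ ℤ), F (g ⊗ₜ[ℂ] 1) = f g) ∧
      (∀ x, F (D x) = dd (F x))) ∧
    (∀ F : (AddMonoidAlgebra ℂ (ι →₀ ℤ) ⊗[ℂ] MvPolynomial (ι × ℕ) ℂ) →ₐ[ℂ] A,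
      (∀ g : AddMonoidAlgebra ℂ (ι →₀ ℤ), F (g ⊗ₜ[ℂ] 1) = f g) →
      (∀ x, F (D x) = dd (F x)) →
      ∀ (α : ι →₀ ℤ) (n : ℕ),
        F (1 ⊗ₜ[ℂ] latticeGen α n) =
          ((n.factorial : ℂ))⁻¹ •
            (dd ^ n) (f (AddMonoidAlgebra.single (-α) 1) *
              dd (f (AddMonoidAlgebra.single α 1)))) := by
  let δ := Derivation.ofLeibniz dd hdd
  have hD : LatticeAlgebra.IsTranslation (Derivation.ofLeibniz D hDder) := ⟨hD1, hD2⟩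
  refine ⟨⟨LatticeAlgebra.lift δ f, ⟨LatticeAlgebra.lift_tmul_one δ f,
    LatticeAlgebra.lift_map_derivation δ f hD⟩, fun F ⟨hF, hFD⟩ =>
      LatticeAlgebra.eq_lift δ f hD F hF hFD⟩, ?_⟩
  exact fun F hF hFD => LatticeAlgebra.map_one_tmul_latticeGen δ f hD F hF hFD

/-- universal property of the differential algebra
`B_L = ℂ[L] ⊗ S(ĥ⁻)` (here `L = ι →₀ ℤ` is free abelian of finite rank,
`S(ĥ⁻) = MvPolynomial (ι × ℕ) ℂ`, and `D = L(−1)` is the derivation with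
`D(e^α ⊗ 1) = e^α ⊗ α(−1)` and `D(α(−1−n)) = (n+1)α(−2−n)`): every algebra homomorphism
`f : ℂ[L] → A` into a commutative differential algebra `(A,∂)` sending each `e^α` to a
unit extends uniquely to a differential algebra homomorphism `F : B_L → A`, and `F` is
given by `F(α(−1−n)) = (1/n!)∂ⁿ(f(e^{−α})∂f(e^α))`. -/
theorem lattice_differential_algebra_universal_property
    {ι : Type*} [Fintype ι] [DecidableEq ι]
    (Bf : (ι →₀ ℤ) →+ (ι →₀ ℤ) →+ ℤ) (hsym : ∀ a b, Bf a b = Bf b a)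
    (D : (AddMonoidAlgebra ℂ (ι →₀ ℤ) ⊗[ℂ] MvPolynomial (ι × ℕ) ℂ) →ₗ[ℂ]
         (AddMonoidAlgebra ℂ (ι →₀ ℤ) ⊗[ℂ] MvPolynomial (ι × ℕ) ℂ))
    (hDder : ∀ x y, D (x * y) = D x * y + x * D y)
    (hD1 : ∀ α : ι →₀ ℤ,
      D (AddMonoidAlgebra.single α 1 ⊗ₜ[ℂ] 1) =
        AddMonoidAlgebra.single α 1 ⊗ₜ[ℂ] latticeGen α 0)
    (hD2 : ∀ (i : ι) (n : ℕ),
      D (1 ⊗ₜ[ℂ] MvPolynomial.X (i, n)) =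
        ((n : ℂ) + 1) • (1 ⊗ₜ[ℂ] MvPolynomial.X (i, n + 1)))
    {A : Type*} [CommRing A] [Algebra ℂ A]
    (dd : Module.End ℂ A) (hdd : ∀ a b : A, dd (a * b) = dd a * b + a * dd b)
    (f : AddMonoidAlgebra ℂ (ι →₀ ℤ) →ₐ[ℂ] A)
    (hunit : ∀ α : ι →₀ ℤ, IsUnit (f (AddMonoidAlgebra.single α 1))) :
    (∃! F : (AddMonoidAlgebra ℂ (ι →₀ ℤ) ⊗[ℂ] MvPolynomial (ι × ℕ) ℂ) →ₐ[ℂ] A,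
      (∀ g : AddMonoidAlgebra ℂ (ι →₀ ℤ), F (g ⊗ₜ[ℂ] 1) = f g) ∧
      (∀ x, F (D x) = dd (F x))) ∧
    (∀ F : (AddMonoidAlgebra ℂ (ι →₀ ℤ) ⊗[ℂ] MvPolynomial (ι × ℕ) ℂ) →ₐ[ℂ] A,
      (∀ g : AddMonoidAlgebra ℂ (ι →₀ ℤ), F (g ⊗ₜ[ℂ] 1) = f g) →
      (∀ x, F (D x) = dd (F x)) →
      ∀ (α : ι →₀ ℤ) (n : ℕ),
        F (1 ⊗ₜ[ℂ] latticeGen α n) =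
          ((n.factorial : ℂ))⁻¹ •
            (dd ^ n) (f (AddMonoidAlgebra.single (-α) 1) *
              dd (f (AddMonoidAlgebra.single α 1)))) :=
  lattice_differential_algebra_universal_property_general D hDder hD1 hD2 dd hdd f
end

section
/- Let V be a nonlocal vertex algebra such that Y(u,x)v ∈ V[[x]] for all u,v ∈ V (no negative powers of x occur). Define u·v = u₋₁v (the constant term of Y(u,x)v). Then (V, ·, 1) is a unital associative algebra, the operator D (Dv = v₋₂1) is a derivation of this algebra, and Y(u,x)v = (e^{xD}u)·v for all u,v ∈ V. -/
/-- A nonlocal vertex algebra, given coefficientwise: `Y u v n` is the mode `uₙv` of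
`Y(u,x)v = Σₙ uₙv x^{-n-1}`.  Weak associativity is stated coefficientwise: the coefficient
of `x₀^p x₂^q` in `(x₀+x₂)^l Y(u,x₀+x₂)Y(v,x₂)w = (x₀+x₂)^l Y(Y(u,x₀)v,x₂)w`,
where `(x₀+x₂)^m` for `m ∈ ℤ` is expanded in nonnegative powers of `x₂` (so
`Y(u,x₀+x₂) = Σ_{m,i} (binom (-m-1) i) uₘ x₀^{-m-1-i} x₂^i`). -/
structure NonlocalVertexAlgebra (V : Type*) [AddCommGroup V] [Module ℂ V] where
  Y : V → V → ℤ → V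
  one : V
  add_left : ∀ (u u' v : V) (n : ℤ), Y (u + u') v n = Y u v n + Y u' v n
  smul_left : ∀ (c : ℂ) (u v : V) (n : ℤ), Y (c • u) v n = c • Y u v n
  add_right : ∀ (u v v' : V) (n : ℤ), Y u (v + v') n = Y u v n + Y u v' n
  smul_right : ∀ (u : V) (c : ℂ) (v : V) (n : ℤ), Y u (c • v) n = c • Y u v n
  trunc : ∀ u v : V, ∃ N : ℤ, ∀ n : ℤ, N ≤ n → Y u v n = 0
  vacuum_left : ∀ (v : V) (n : ℤ), Y one v n = if n = -1 then v else 0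
  creation_pos : ∀ (v : V) (n : ℤ), 0 ≤ n → Y v one n = 0
  creation_const : ∀ v : V, Y v one (-1) = v
  weak_assoc : ∀ u v w : V, ∃ l : ℕ, ∀ p q : ℤ,
    (∑ s ∈ Finset.range (l + 1), (l.choose s) •
      ∑ᶠ i : ℕ, Ring.choose ((p - ((l : ℤ) - s)) + i) i •
        Y u (Y v w ((i : ℤ) - (q - s) - 1)) (-(p - ((l : ℤ) - s)) - i - 1)) =
    ∑ s ∈ Finset.range (l + 1), (l.choose s) •
      Y (Y u v (-(p - ((l : ℤ) - s)) - 1)) w (-(q - (s : ℤ)) - 1)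

/-- The canonical operator `D v = v₋₂1`. -/
def NonlocalVertexAlgebra.D {V : Type*} [AddCommGroup V] [Module ℂ V]
    (A : NonlocalVertexAlgebra V) (v : V) : V :=
  A.Y v A.one (-2)

section Aux

variable {V : Type*} [AddCommGroup V] [Module ℂ V]

private lemma nva_sum_single {l : ℕ} (T : ℕ → V) (hT : ∀ s, 1 ≤ s → T s = 0) :
    ∑ s ∈ Finset.range (l + 1), (l.choose s) • T s = T 0 := by
  rw [Finset.sum_eq_single_of_mem 0 (Finset.mem_range.mpr (by omega))]
  · simp
  · intro b _ hb
    rw [hT b (by omega), smul_zero]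

private lemma nva_sum_two {l : ℕ} (T : ℕ → V) (hT : ∀ s, 2 ≤ s → T s = 0) :
    ∑ s ∈ Finset.range (l + 1), (l.choose s) • T s = T 0 + l • T 1 := by
  cases l with
  | zero => simp
  | succ l' =>
    rw [← Finset.sum_subset (Finset.range_subset_range.mpr (by omega) :
        Finset.range 2 ⊆ Finset.range (l' + 1 + 1))]
    · rw [Finset.sum_range_succ, Finset.sum_range_one]
      simp [Nat.choose_one_right]
    · intro x _ hx
      rw [hT x (by simp [Finset.mem_range] at hx; omega), smul_zero]

variable (A : NonlocalVertexAlgebra V)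

private lemma nva_Y_zero_right (u : V) (n : ℤ) : A.Y u 0 n = 0 := by
  have h := A.smul_right u 0 0 n
  simpa using h

private lemma nva_D_smul (c : ℂ) (x : V) : A.D (c • x) = c • A.D x :=
  A.smul_left c x A.one (-2)

private lemma nva_D_one : A.D A.one = 0 := by
  show A.Y A.one A.one (-2) = 0
  rw [A.vacuum_left]
  norm_num

private lemma nva_keyA (hreg : ∀ (u v : V) (n : ℤ), 0 ≤ n → A.Y u v n = 0)
    (u v w : V) (m : ℤ) :
    A.Y u (A.Y v w (-1)) (-m - 1) = A.Y (A.Y u v (-m - 1)) w (-1) := by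
  obtain ⟨l, h⟩ := A.weak_assoc u v w
  have H := h (m + l) 0
  rw [nva_sum_single _ (fun s hs => ?hz1), nva_sum_single _ (fun s hs => ?hz2)] at H
  case hz1 =>
    have : ∀ i : ℕ, Ring.choose ((m + l - ((l : ℤ) - s)) + i) i •
        A.Y u (A.Y v w ((i : ℤ) - ((0:ℤ) - s) - 1)) (-(m + l - ((l : ℤ) - s)) - i - 1) = 0 := by
      intro i
      rw [hreg v w _ (by omega), nva_Y_zero_right, smul_zero]
    rw [finsum_congr this, finsum_zero]
  case hz2 =>
    rw [hreg _ w _ (by omega)]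
  · rw [finsum_eq_single _ 0 (fun i hi => ?_)] at H
    · simp only [Nat.cast_zero, Ring.choose_zero_right, one_smul] at H
      ring_nf at H ⊢
      exact H
    · rw [hreg v w _ (by omega), nva_Y_zero_right, smul_zero]

private lemma nva_finsum_two {M : Type*} [AddCommMonoid M] (f : ℕ → M)
    (hf : ∀ i, 2 ≤ i → f i = 0) : ∑ᶠ i, f i = f 0 + f 1 := by
  rw [finsum_eq_finset_sum_of_support_subset f (s := Finset.range 2) ?_]
  · rw [Finset.sum_range_succ, Finset.sum_range_one]
  · intro i hi
    simp only [Function.mem_support] at hi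
    simp only [Finset.coe_range, Set.mem_Iio]
    by_contra hc
    exact hi (hf i (by omega))

private lemma nva_keyC (hreg : ∀ (u v : V) (n : ℤ), 0 ≤ n → A.Y u v n = 0)
    (u v : V) (m : ℤ) :
    A.D (A.Y u v (-m - 1)) = A.Y u (A.D v) (-m - 1) + (m + 1) • A.Y u v (-m - 2) := by
  obtain ⟨l, h⟩ := A.weak_assoc u v A.one
  have H := h (m + l) 1
  rw [nva_sum_two _ (fun s hs => ?hz1), nva_sum_two _ (fun s hs => ?hz2)] at H
  case hz1 =>
    have hv : ∀ i : ℕ, Ring.choose ((m + l - ((l : ℤ) - s)) + i) i •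
        A.Y u (A.Y v A.one ((i : ℤ) - ((1:ℤ) - s) - 1))
          (-(m + l - ((l : ℤ) - s)) - i - 1) = 0 := by
      intro i
      rw [A.creation_pos _ _ (by omega), nva_Y_zero_right, smul_zero]
    rw [finsum_congr hv, finsum_zero]
  case hz2 =>
    rw [A.creation_pos _ _ (by omega)]
  · rw [nva_finsum_two _ (fun i hi => ?f0), finsum_eq_single _ 0 (fun i hi => ?f1)] at H
    case f0 =>
      rw [A.creation_pos _ _ (by omega), nva_Y_zero_right, smul_zero]
    case f1 =>
      rw [A.creation_pos _ _ (by omega), nva_Y_zero_right, smul_zero]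
    · simp only [Nat.cast_zero, Nat.cast_one, Ring.choose_zero_right, one_smul,
        sub_zero] at H
      rw [Ring.choose_one_right] at H
      norm_num at H
      simp only [A.creation_const] at H
      have H2 := add_right_cancel H
      have e : (-m - 1 - 1 : ℤ) = -m - 2 := by ring
      rw [e] at H2
      exact H2.symm

private lemma nva_shift (hreg : ∀ (u v : V) (n : ℤ), 0 ≤ n → A.Y u v n = 0)
    (u v : V) (m : ℤ) :
    A.Y u v (-m - 1) = A.Y (A.Y u A.one (-m - 1)) v (-1) := by
  have h := nva_keyA A hreg u A.one v m
  rwa [A.vacuum_left, if_pos rfl] at h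

private lemma nva_alpha (hreg : ∀ (u v : V) (n : ℤ), 0 ≤ n → A.Y u v n = 0)
    (u : V) (n : ℕ) :
    A.Y u A.one (-(n : ℤ) - 1) = ((n.factorial : ℂ))⁻¹ • A.D^[n] u := by
  induction n with
  | zero => simpa using A.creation_const u
  | succ n ih =>
    have hk := nva_keyC A hreg u A.one n
    rw [nva_D_one, nva_Y_zero_right, zero_add, ih, nva_D_smul] at hk
    have hne : ((n : ℂ) + 1) ≠ 0 := Nat.cast_add_one_ne_zero n
    have h2 : (((n : ℤ) + 1 : ℤ) : ℂ) • A.Y u A.one (-(n : ℤ) - 2)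
        = (n.factorial : ℂ)⁻¹ • A.D (A.D^[n] u) := by
      rw [Int.cast_smul_eq_zsmul]
      exact hk.symm
    have e : (-(↑(n + 1) : ℤ) - 1) = -(n : ℤ) - 2 := by push_cast; ring
    rw [e]
    have h3 : A.Y u A.one (-(n : ℤ) - 2)
        = ((n : ℂ) + 1)⁻¹ • ((n.factorial : ℂ)⁻¹ • A.D (A.D^[n] u)) := by
      rw [eq_inv_smul_iff₀ hne]
      rw [← h2]
      congr 1
      push_cast
      ring
    rw [h3, smul_smul, Function.iterate_succ_apply']
    congr 1
    rw [← mul_inv, Nat.factorial_succ]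
    push_cast
    ring

end Aux

/-- if `V` is a nonlocal vertex algebra with `Y(u,x)v ∈ V[[x]]` for all
`u,v` (i.e. `uₙv = 0` for `n ≥ 0`), then `u·v := u₋₁v` makes `V` a unital associative
algebra, `D` is a derivation of this algebra, and `Y(u,x)v = (e^{xD}u)·v`, i.e.
`u₋ₙ₋₁v = (1/n!) (Dⁿu)·v`. -/
theorem regular_nonlocal_vertex_algebra_is_differential_algebra
    {V : Type*} [AddCommGroup V] [Module ℂ V] (A : NonlocalVertexAlgebra V)
    (hreg : ∀ (u v : V) (n : ℤ), 0 ≤ n → A.Y u v n = 0) :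
    -- associativity of u·v = u₋₁v
    (∀ u v w : V, A.Y (A.Y u v (-1)) w (-1) = A.Y u (A.Y v w (-1)) (-1)) ∧
    -- 1 is a two-sided identity
    (∀ v : V, A.Y A.one v (-1) = v ∧ A.Y v A.one (-1) = v) ∧
    -- D is a derivation of the algebra (V, ·)
    (∀ u v : V, A.D (A.Y u v (-1)) = A.Y (A.D u) v (-1) + A.Y u (A.D v) (-1)) ∧
    -- Y(u,x)v = (e^{xD}u)·v
    (∀ (u v : V) (n : ℕ),
      A.Y u v (-(n : ℤ) - 1) = ((n.factorial : ℂ))⁻¹ • A.Y (A.D^[n] u) v (-1)) := by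
  refine ⟨fun u v w => ?_, fun v => ⟨by rw [A.vacuum_left, if_pos rfl], A.creation_const v⟩,
    fun u v => ?_, fun u v n => ?_⟩
  · have h := nva_keyA A hreg u v w 0
    norm_num at h
    exact h.symm
  · have h := nva_keyC A hreg u v 0
    norm_num at h
    have h2 : A.Y u v (-2) = A.Y (A.D u) v (-1) := by
      have := nva_shift A hreg u v 1
      norm_num at this
      exact this
    rw [h, h2]
    abel
  · rw [nva_shift A hreg u v n, nva_alpha A hreg u n, A.smul_left]
end
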